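/- arXiv:1012.2910 — 8 statements merged into one kernel-verified Lean document; each statement's English description precedes it below -/
import Mathlib

section
/- Let a be an ASHE with direction vector v ∈ ℤ^d and blocking relation R on {1,…,d}. For any subset U of S with envelope [m,M] (i.e. m = inf U and M = sup U componentwise), the union over x ∈ U of the blocked sets B(x) equals B(m) ∪ B(M). -/
/-! Whether coordinate `j` of `x` is critical depends only on whether `x j` leaves a fixed interval
`[-v j, C j - v j]`. Over `U`, the smallest and largest values of `x j` are `m j` and `M j`
(envelopes of subsets of `ℤ` are attained), and a set leaves an interval exactly when its minimum
or its maximum does. -/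

open Set

theorem Int.isLeast_of_isGLB {s : Set ℤ} {a : ℤ} (hs : s.Nonempty) (h : IsGLB s a) :
    IsLeast s a :=
  ⟨h.csInf_eq hs ▸ Int.csInf_mem hs h.bddBelow, h.1⟩

theorem Int.isGreatest_of_isLUB {s : Set ℤ} {b : ℤ} (hs : s.Nonempty) (h : IsLUB s b) :
    IsGreatest s b :=
  ⟨h.csSup_eq hs ▸ Int.csSup_mem hs h.bddAbove, h.1⟩

theorem exists_mem_notMem_Icc_iff {α : Type*} [LinearOrder α] {s : Set α} {a b lo hi : α}
    (ha : IsLeast s a) (hb : IsGreatest s b) :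
    (∃ y ∈ s, y ∉ Icc lo hi) ↔ a ∉ Icc lo hi ∨ b ∉ Icc lo hi := by
  constructor
  · rintro ⟨y, hy, hyI⟩
    have hay : a ≤ y := ha.2 hy
    have hyb : y ≤ b := hb.2 hy
    simp only [mem_Icc, not_and_or, not_le] at hyI ⊢
    rcases hyI with hlo | hhi
    · exact Or.inl (Or.inl (hay.trans_lt hlo))
    · exact Or.inr (Or.inr (hhi.trans_le hyb))
  · rintro (h | h)
    exacts [⟨a, ha.1, h⟩, ⟨b, hb.1, h⟩]

theorem exists_mem_apply_notMem_Icc_iff {ι : Type*} {U : Set (ι → ℤ)} {m M : ι → ℤ}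
    (hU : U.Nonempty) (hm : IsGLB U m) (hM : IsLUB U M) (j : ι) (lo hi : ℤ) :
    (∃ x ∈ U, x j ∉ Icc lo hi) ↔ m j ∉ Icc lo hi ∨ M j ∉ Icc lo hi := by
  refine (exists_mem_image (f := fun x : ι → ℤ ↦ x j) (p := (· ∉ Icc lo hi))).symm.trans
    (exists_mem_notMem_Icc_iff ?_ ?_)
  exacts [Int.isLeast_of_isGLB (hU.image _) (isGLB_pi.mp hm j),
    Int.isGreatest_of_isLUB (hU.image _) (isLUB_pi.mp hM j)]

theorem stmt2_general {d : ℕ} (C v : Fin d → ℤ) (R : Fin d → Fin d → Prop)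
    (U : Set (Fin d → ℤ)) (hU : U.Nonempty)
    (m M : Fin d → ℤ) (hm : IsGLB U m) (hM : IsLUB U M) :
    ∀ i : Fin d,
      (∃ x ∈ U, ∃ j, ¬(0 ≤ x j + v j ∧ x j + v j ≤ C j) ∧ R j i) ↔
      ((∃ j, ¬(0 ≤ m j + v j ∧ m j + v j ≤ C j) ∧ R j i) ∨
       (∃ j, ¬(0 ≤ M j + v j ∧ M j + v j ≤ C j) ∧ R j i)) := by
  intro i
  have critical_iff (j : Fin d) (y : ℤ) :
      ¬(0 ≤ y + v j ∧ y + v j ≤ C j) ↔ y ∉ Icc (-v j) (C j - v j) := by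
    rw [mem_Icc]
    omega
  simp only [critical_iff, ← or_and_right, ← exists_or,
    ← exists_mem_apply_notMem_Icc_iff hU hm hM]
  exact ⟨fun ⟨x, hx, j, hj, hR⟩ ↦ ⟨j, ⟨x, hx, hj⟩, hR⟩,
    fun ⟨j, ⟨x, hx, hj⟩, hR⟩ ↦ ⟨x, hx, j, hj, hR⟩⟩

/-- For an ASHE with direction `v` and blocking relation `R`, and a nonempty
subset `U` of `S` with envelope `[m,M]`, the union of the blocked sets `B(x)` over `x ∈ U`
equals `B(m) ∪ B(M)`. -/
theorem stmt2 {d : ℕ} (C v : Fin d → ℤ) (R : Fin d → Fin d → Prop)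
    (U : Set (Fin d → ℤ)) (hU : U.Nonempty)
    (hUS : ∀ x ∈ U, ∀ i, 0 ≤ x i ∧ x i ≤ C i)
    (m M : Fin d → ℤ) (hm : IsGLB U m) (hM : IsLUB U M) :
    ∀ i : Fin d,
      (∃ x ∈ U, ∃ j, ¬(0 ≤ x j + v j ∧ x j + v j ≤ C j) ∧ R j i) ↔
      ((∃ j, ¬(0 ≤ m j + v j ∧ m j + v j ≤ C j) ∧ R j i) ∨
       (∃ j, ¬(0 ≤ M j + v j ∧ M j + v j ≤ C j) ∧ R j i)) :=
  stmt2_general C v R U hU m M hm hM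
end

section
/- Let a be an ASHE with direction vector v and blocking relation R. Let m ≤ M in S and suppose B(m) ∪ B(M) = ∅. Then for every x with m ≤ x ≤ M, the action is x·a = (x + v) ∨ 0 ∧ C (componentwise truncation), and consequently the envelope transition satisfies [m,M] ⊡ a = [m·a, M·a], with ‖M·a − m·a‖₁ ≤ ‖M − m‖₁. -/
open Classical in
/-- The action of an ASHE with capacities `C`, direction vector `v` and
blocking relation `R`. -/
noncomputable def asheAct {d : ℕ} (C v : Fin d → ℤ) (R : Fin d → Fin d → Prop)
    (x : Fin d → ℤ) : Fin d → ℤ := fun i =>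
  if ∃ j, ¬(0 ≤ x j + v j ∧ x j + v j ≤ C j) ∧ R j i then x i
  else max 0 (min (x i + v i) (C i))

/-!
Blocking only happens at coordinates `i` related to a critical coordinate `j`, i.e. one where
`x j + v j` leaves `[0, C j]`. Since `[0, C j]` is an interval, `x j + v j` stays inside it whenever
`m j ≤ x j ≤ M j` and both `m j + v j` and `M j + v j` lie inside it; so nothing in the box `[m, M]`
is blocked and the action there is the translation by `v` followed by truncation to `[0, C]`.
That map is monotone, which identifies the envelope, and each coordinate of it is 1-Lipschitz,
which gives the `ℓ¹` bound.
-/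

def truncShift {d : ℕ} (C v x : Fin d → ℤ) : Fin d → ℤ := fun i => max 0 (min (x i + v i) (C i))

theorem abs_max_min_sub_max_min_le_abs {α : Type*} [AddCommGroup α] [LinearOrder α]
    [IsOrderedAddMonoid α] (l u a b : α) :
    |max l (min a u) - max l (min b u)| ≤ |a - b| := calc
  |max l (min a u) - max l (min b u)| ≤ |min a u - min b u| := by
    simpa only [max_comm l] using abs_max_sub_max_le_abs (min a u) (min b u) l
  _ ≤ max |a - b| |u - u| := abs_min_sub_min_le_max a u b u
  _ = |a - b| := by simp

section

variable {d : ℕ} (C v : Fin d → ℤ)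

theorem truncShift_mono : Monotone (truncShift C v) := fun _ _ hxy i =>
  max_le_max_left 0 (min_le_min_right (C i) (add_le_add (hxy i) le_rfl))

theorem abs_truncShift_sub_le (x y : Fin d → ℤ) (i : Fin d) :
    |truncShift C v x i - truncShift C v y i| ≤ |x i - y i| := by
  simpa only [truncShift, add_sub_add_right_eq_sub] using
    abs_max_min_sub_max_min_le_abs 0 (C i) (x i + v i) (y i + v i)

theorem asheAct_eq_truncShift (R : Fin d → Fin d → Prop) {m M x : Fin d → ℤ}
    (hB : ∀ i : Fin d,
      (¬ ∃ j, ¬(0 ≤ m j + v j ∧ m j + v j ≤ C j) ∧ R j i) ∧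
      (¬ ∃ j, ¬(0 ≤ M j + v j ∧ M j + v j ≤ C j) ∧ R j i))
    (hmx : m ≤ x) (hxM : x ≤ M) :
    asheAct C v R x = truncShift C v x := by
  funext i
  refine if_neg ?_
  rintro ⟨j, hxj, hji⟩
  have hmj : 0 ≤ m j + v j ∧ m j + v j ≤ C j := not_not.mp fun h => (hB i).1 ⟨j, h, hji⟩
  have hMj : 0 ≤ M j + v j ∧ M j + v j ≤ C j := not_not.mp fun h => (hB i).2 ⟨j, h, hji⟩
  have hmxj : m j ≤ x j := hmx j
  have hxMj : x j ≤ M j := hxM j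
  exact hxj ⟨by omega, by omega⟩

end

theorem stmt3_general {d : ℕ} (C v : Fin d → ℤ) (R : Fin d → Fin d → Prop)
    (m M : Fin d → ℤ)
    (hmM : m ≤ M)
    (hB : ∀ i : Fin d,
      (¬ ∃ j, ¬(0 ≤ m j + v j ∧ m j + v j ≤ C j) ∧ R j i) ∧
      (¬ ∃ j, ¬(0 ≤ M j + v j ∧ M j + v j ≤ C j) ∧ R j i)) :
    (∀ x : Fin d → ℤ, m ≤ x → x ≤ M →
      asheAct C v R x = fun i => max 0 (min (x i + v i) (C i))) ∧
    IsLeast {y | ∃ x : Fin d → ℤ, m ≤ x ∧ x ≤ M ∧ y = asheAct C v R x} (asheAct C v R m) ∧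
    IsGreatest {y | ∃ x : Fin d → ℤ, m ≤ x ∧ x ≤ M ∧ y = asheAct C v R x} (asheAct C v R M) ∧
    ∑ i, |asheAct C v R M i - asheAct C v R m i| ≤ ∑ i, |M i - m i| := by
  have hact : Set.EqOn (truncShift C v) (asheAct C v R) (Set.Icc m M) := fun _ hx =>
    (asheAct_eq_truncShift C v R hB hx.1 hx.2).symm
  have hmono : MonotoneOn (asheAct C v R) (Set.Icc m M) :=
    ((truncShift_mono C v).monotoneOn _).congr hact
  have henv : {y | ∃ x : Fin d → ℤ, m ≤ x ∧ x ≤ M ∧ y = asheAct C v R x} =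
      asheAct C v R '' Set.Icc m M := by
    ext y
    simp only [Set.mem_ofPred_eq, Set.mem_image, Set.mem_Icc, and_assoc, eq_comm]
  refine ⟨fun x hmx hxM => asheAct_eq_truncShift C v R hB hmx hxM, ?_, ?_, ?_⟩
  · exact henv ▸ hmono.map_isLeast (isLeast_Icc hmM)
  · exact henv ▸ hmono.map_isGreatest (isGreatest_Icc hmM)
  · rw [← hact ⟨le_rfl, hmM⟩, ← hact ⟨hmM, le_rfl⟩]
    exact Finset.sum_le_sum fun i _ => abs_truncShift_sub_le C v M m i

/-- if B(m) ∪ B(M) = ∅ then the ASHE acts by truncated translation on [m,M],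
the envelope transition is [m·a, M·a], and the ℓ¹ distance does not increase. -/
theorem stmt3 {d : ℕ} (C v : Fin d → ℤ) (R : Fin d → Fin d → Prop)
    (m M : Fin d → ℤ)
    (hm : ∀ i, 0 ≤ m i ∧ m i ≤ C i) (hM : ∀ i, 0 ≤ M i ∧ M i ≤ C i)
    (hmM : m ≤ M)
    (hB : ∀ i : Fin d,
      (¬ ∃ j, ¬(0 ≤ m j + v j ∧ m j + v j ≤ C j) ∧ R j i) ∧
      (¬ ∃ j, ¬(0 ≤ M j + v j ∧ M j + v j ≤ C j) ∧ R j i)) :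
    (∀ x : Fin d → ℤ, m ≤ x → x ≤ M →
      asheAct C v R x = fun i => max 0 (min (x i + v i) (C i))) ∧
    IsLeast {y | ∃ x : Fin d → ℤ, m ≤ x ∧ x ≤ M ∧ y = asheAct C v R x} (asheAct C v R m) ∧
    IsGreatest {y | ∃ x : Fin d → ℤ, m ≤ x ∧ x ≤ M ∧ y = asheAct C v R x} (asheAct C v R M) ∧
    ∑ i, |asheAct C v R M i - asheAct C v R m i| ≤ ∑ i, |M i - m i| :=
  stmt3_general C v R m M hmM hB
end

section
/- Let a be an ASHE with direction vector v and blocking relation R = {(i,i) : i ∈ B} for some subset B of {1,…,d}. For m ≤ M in S, writing [m',M'] = [m,M] ⊡ a, one has ‖M' − m'‖₁ ≤ Σ_{i ∉ B} (M_i − m_i) + Σ_{i ∈ B} max(M_i − m_i, |v_i| − 1). -/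
/-!
With the diagonal blocking relation `R = {(i,i) : i ∈ B}` the action is coordinatewise: a
coordinate outside `B` is clamped to `[0, C_i]` after the shift, which is monotone and
1-Lipschitz; a coordinate in `B` moves by `v_i` if it stays in `[0, C_i]` and stands still
otherwise. In the second case two points of `[m_i, M_i]` of which one moves and the other is
blocked end up at most `|v_i| - 1` apart. Bounding every pairwise difference of images
coordinatewise bounds the width of the envelope.
-/

open Finset

/-- The one-dimensional step of an unblocked coordinate. -/
def clampStep (c w t : ℤ) : ℤ := max 0 (min (t + w) c)

/-- The one-dimensional step of a coordinate that blocks itself. -/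
def selfBlockingStep (c w t : ℤ) : ℤ := if 0 ≤ t + w ∧ t + w ≤ c then t + w else t

lemma clampStep_sub_le {c w m M s t : ℤ} (hs : s ∈ Set.Icc m M) (ht : t ∈ Set.Icc m M) :
    clampStep c w t - clampStep c w s ≤ M - m := by
  obtain ⟨hs₁, hs₂⟩ := hs
  obtain ⟨ht₁, ht₂⟩ := ht
  simp only [clampStep, max_def, min_def]
  split_ifs <;> omega

lemma selfBlockingStep_sub_le {c w m M s t : ℤ} (hm : 0 ≤ m) (hM : M ≤ c)
    (hs : s ∈ Set.Icc m M) (ht : t ∈ Set.Icc m M) :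
    selfBlockingStep c w t - selfBlockingStep c w s ≤ max (M - m) (|w| - 1) := by
  obtain ⟨hs₁, hs₂⟩ := hs
  obtain ⟨ht₁, ht₂⟩ := ht
  simp only [selfBlockingStep, abs_eq_max_neg, max_def]
  split_ifs <;> omega

lemma asheAct_apply_of_diag {d : ℕ} {C v : Fin d → ℤ} {B : Finset (Fin d)}
    {R : Fin d → Fin d → Prop} (hR : ∀ j i, R j i ↔ (j = i ∧ i ∈ B)) (x : Fin d → ℤ) (i : Fin d) :
    asheAct C v R x i =
      if i ∈ B then selfBlockingStep (C i) (v i) (x i) else clampStep (C i) (v i) (x i) := by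
  have hblocked : (∃ j, ¬(0 ≤ x j + v j ∧ x j + v j ≤ C j) ∧ R j i) ↔
      (i ∈ B ∧ ¬(0 ≤ x i + v i ∧ x i + v i ≤ C i)) := by
    simp only [hR]
    constructor
    · rintro ⟨j, hj, rfl, hi⟩
      exact ⟨hi, hj⟩
    · rintro ⟨hi, hx⟩
      exact ⟨i, hx, rfl, hi⟩
  simp only [asheAct, hblocked]
  by_cases hi : i ∈ B <;> by_cases hx : 0 ≤ x i + v i ∧ x i + v i ≤ C i <;>
    simp only [hi, hx, true_and, false_and, not_true_eq_false, not_false_eq_true, if_true,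
      if_false, selfBlockingStep, clampStep]
  omega

lemma asheAct_sub_le_of_diag {d : ℕ} {C v : Fin d → ℤ} {B : Finset (Fin d)}
    {R : Fin d → Fin d → Prop} (hR : ∀ j i, R j i ↔ (j = i ∧ i ∈ B)) {m M x y : Fin d → ℤ}
    (hm : ∀ i, 0 ≤ m i) (hM : ∀ i, M i ≤ C i) (hx : x ∈ Set.Icc m M) (hy : y ∈ Set.Icc m M)
    (i : Fin d) :
    asheAct C v R x i - asheAct C v R y i ≤
      if i ∈ B then max (M i - m i) (|v i| - 1) else M i - m i := by
  have hxi : x i ∈ Set.Icc (m i) (M i) := ⟨hx.1 i, hx.2 i⟩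
  have hyi : y i ∈ Set.Icc (m i) (M i) := ⟨hy.1 i, hy.2 i⟩
  rw [asheAct_apply_of_diag hR, asheAct_apply_of_diag hR]
  split_ifs
  · exact selfBlockingStep_sub_le (hm i) (hM i) hyi hxi
  · exact clampStep_sub_le hyi hxi

lemma IsLUB.sub_isGLB_le {α : Type*} [AddCommGroup α] [PartialOrder α] [IsOrderedAddMonoid α]
    {s : Set α} {a b K : α} (ha : IsLUB s a) (hb : IsGLB s b)
    (hK : ∀ x ∈ s, ∀ y ∈ s, x - y ≤ K) : a - b ≤ K := by
  have hub : b + K ∈ upperBounds s := fun x hx =>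
    sub_le_iff_le_add.1 (hb.2 fun y hy => sub_le_comm.1 (hK x hx y hy))
  exact sub_le_iff_le_add'.2 (ha.2 hub)

/-- for an ASHE whose blocking relation is the diagonal on a set B of
auto-blocking components, the width of the envelope transition is bounded by
∑_{i∉B} (M_i - m_i) + ∑_{i∈B} max(M_i - m_i, |v_i| - 1). -/
theorem stmt5 {d : ℕ} (C v : Fin d → ℤ) (B : Finset (Fin d))
    (R : Fin d → Fin d → Prop) (hR : ∀ j i, R j i ↔ (j = i ∧ i ∈ B))
    (m M : Fin d → ℤ)
    (hm : ∀ i, 0 ≤ m i ∧ m i ≤ C i) (hM : ∀ i, 0 ≤ M i ∧ M i ≤ C i)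
    (hmM : m ≤ M)
    (m' M' : Fin d → ℤ)
    (hm' : IsGLB {y | ∃ x : Fin d → ℤ, m ≤ x ∧ x ≤ M ∧ y = asheAct C v R x} m')
    (hM' : IsLUB {y | ∃ x : Fin d → ℤ, m ≤ x ∧ x ≤ M ∧ y = asheAct C v R x} M') :
    ∑ i, |M' i - m' i| ≤
      ∑ i ∈ Finset.univ \ B, (M i - m i) + ∑ i ∈ B, max (M i - m i) (|v i| - 1) := by
  classical
  set S := {y | ∃ x : Fin d → ℤ, m ≤ x ∧ x ≤ M ∧ y = asheAct C v R x}
  have hS : S.Nonempty := ⟨_, m, le_rfl, hmM, rfl⟩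
  have hwidth : ∀ i, |M' i - m' i| ≤
      if i ∈ B then max (M i - m i) (|v i| - 1) else M i - m i := by
    intro i
    have hle : m' i ≤ M' i := isGLB_le_isLUB hm' hM' hS i
    rw [abs_of_nonneg (sub_nonneg.2 hle)]
    refine (isLUB_pi.1 hM' i).sub_isGLB_le (isGLB_pi.1 hm' i) ?_
    rintro _ ⟨_, ⟨x, hx₁, hx₂, rfl⟩, rfl⟩ _ ⟨_, ⟨y, hy₁, hy₂, rfl⟩, rfl⟩
    exact asheAct_sub_le_of_diag hR (fun i => (hm i).1) (fun i => (hM i).2) ⟨hx₁, hx₂⟩ ⟨hy₁, hy₂⟩ i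
  calc ∑ i, |M' i - m' i|
      ≤ ∑ i, if i ∈ B then max (M i - m i) (|v i| - 1) else M i - m i :=
        sum_le_sum fun i _ => hwidth i
    _ = ∑ i ∈ univ \ B, (M i - m i) + ∑ i ∈ B, max (M i - m i) (|v i| - 1) := by
        rw [sum_ite, filter_mem_eq_inter, univ_inter, filter_not, filter_mem_eq_inter, univ_inter,
          add_comm]
end

section
/- For any ASHE a with direction vector v ≠ 0 and any m ≤ M in S, writing [m',M'] = [m,M] ⊡ a, one has ‖M' − m'‖₁ ≤ ‖M − m‖₁ + ‖v‖₁ − 1 whenever there exists a component i and states x,y in [m,M] with x_i+v_i ∈ [0,C_i] and y_i+v_i ∉ [0,C_i]; in all cases ‖M' − m'‖₁ ≤ ‖M − m‖₁ + ‖v‖₁. -/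
/-!
Each coordinate of `x·a` is either `x_i` or the clamped move `max 0 (min (x_i + v_i) C_i)`,
which is monotone in `x_i`. Hence for `m ≤ x ≤ M` the image lies in the box
`[m ⊓ move m, M ⊔ move M]`, whose `i`-th side is at most `M_i - m_i + |v_i|`. If some
`y ∈ [m, M]` has `y_i + v_i ∉ [0, C_i]`, then `v_i ≠ 0` and the clamp cuts the `i`-th side
strictly, which over `ℤ` saves `1`.
-/

open Finset

theorem le_isGLB_le_isLUB_le {α : Type*} [Preorder α] {s : Set α} {a b l u : α}
    (ha : IsGLB s a) (hb : IsLUB s b) (hs : s.Nonempty) (hsub : s ⊆ Set.Icc l u) :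
    l ≤ a ∧ a ≤ b ∧ b ≤ u :=
  ⟨ha.2 fun _ hy => (hsub hy).1, isGLB_le_isLUB ha hb hs, hb.2 fun _ hy => (hsub hy).2⟩

section Clamp

variable {a b c w : ℤ}

theorem max_clamp_sub_min_clamp_le (ha : 0 ≤ a) (hab : a ≤ b) (hb : b ≤ c) :
    max b (max 0 (min (b + w) c)) - min a (max 0 (min (a + w) c)) ≤ b - a + |w| := by
  rcases abs_cases w with ⟨hw, _⟩ | ⟨hw, _⟩ <;> rw [hw] <;> omega

theorem max_clamp_sub_min_clamp_lt (ha : 0 ≤ a) (hab : a ≤ b) (hb : b ≤ c)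
    (hcut : a + w < 0 ∨ c < b + w) :
    max b (max 0 (min (b + w) c)) - min a (max 0 (min (a + w) c)) < b - a + |w| := by
  rcases abs_cases w with ⟨hw, _⟩ | ⟨hw, _⟩ <;> rw [hw] <;> omega

end Clamp

section Ashe

variable {d : ℕ} (C v : Fin d → ℤ) (R : Fin d → Fin d → Prop)

def asheMove (x : Fin d → ℤ) : Fin d → ℤ := fun i => max 0 (min (x i + v i) (C i))

theorem asheMove_mono : Monotone (asheMove C v) := fun _ _ hxy i =>
  max_le_max le_rfl (min_le_min (add_le_add_left (hxy i) _) le_rfl)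

theorem asheAct_apply_eq_or (x : Fin d → ℤ) (i : Fin d) :
    asheAct C v R x i = x i ∨ asheAct C v R x i = asheMove C v x i := by
  unfold asheAct asheMove
  split_ifs <;> simp

theorem asheAct_mem_Icc {m M x : Fin d → ℤ} (hmx : m ≤ x) (hxM : x ≤ M) :
    asheAct C v R x ∈ Set.Icc (m ⊓ asheMove C v m) (M ⊔ asheMove C v M) := by
  refine ⟨fun i => ?_, fun i => ?_⟩ <;>
    rcases asheAct_apply_eq_or C v R x i with h | h <;> rw [h]
  · exact inf_le_of_left_le (hmx i)
  · exact inf_le_of_right_le (asheMove_mono C v hmx i)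
  · exact le_sup_of_le_left (hxM i)
  · exact le_sup_of_le_right (asheMove_mono C v hxM i)

end Ashe

theorem stmt7_general {d : ℕ} (C v : Fin d → ℤ) (R : Fin d → Fin d → Prop)
    (m M : Fin d → ℤ)
    (hm : ∀ i, 0 ≤ m i ∧ m i ≤ C i) (hM : ∀ i, 0 ≤ M i ∧ M i ≤ C i)
    (hmM : m ≤ M)
    (m' M' : Fin d → ℤ)
    (hm' : IsGLB {y | ∃ x : Fin d → ℤ, m ≤ x ∧ x ≤ M ∧ y = asheAct C v R x} m')
    (hM' : IsLUB {y | ∃ x : Fin d → ℤ, m ≤ x ∧ x ≤ M ∧ y = asheAct C v R x} M') :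
    (∑ i, |M' i - m' i| ≤ ∑ i, |M i - m i| + ∑ i, |v i|) ∧
    ((∃ i : Fin d, ∃ x y : Fin d → ℤ, m ≤ x ∧ x ≤ M ∧ m ≤ y ∧ y ≤ M ∧
        (0 ≤ x i + v i ∧ x i + v i ≤ C i) ∧ ¬(0 ≤ y i + v i ∧ y i + v i ≤ C i)) →
      ∑ i, |M' i - m' i| ≤ ∑ i, |M i - m i| + ∑ i, |v i| - 1) := by
  obtain ⟨hlo, hm'M', hhi⟩ := le_isGLB_le_isLUB_le hm' hM' ⟨_, m, le_rfl, hmM, rfl⟩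
    (by rintro _ ⟨x, hmx, hxM, rfl⟩; exact asheAct_mem_Icc C v R hmx hxM)
  have hwidth : ∀ i, |M' i - m' i| ≤
      max (M i) (asheMove C v M i) - min (m i) (asheMove C v m i) := fun i => by
    rw [abs_of_nonneg (sub_nonneg.2 (hm'M' i))]
    exact sub_le_sub (hhi i) (hlo i)
  have hside : ∀ i, |M' i - m' i| ≤ |M i - m i| + |v i| := fun i => by
    rw [abs_of_nonneg (sub_nonneg.2 (hmM i))]
    exact (hwidth i).trans (max_clamp_sub_min_clamp_le (hm i).1 (hmM i) (hM i).2)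
  refine ⟨by simpa only [sum_add_distrib] using sum_le_sum fun i _ => hside i, ?_⟩
  rintro ⟨i, -, y, -, -, hmy, hyM, -, hy⟩
  have hcut : m i + v i < 0 ∨ C i < M i + v i := by
    have : m i ≤ y i := hmy i
    have : y i ≤ M i := hyM i
    omega
  have hlt : |M' i - m' i| < |M i - m i| + |v i| := by
    rw [abs_of_nonneg (sub_nonneg.2 (hmM i))]
    exact (hwidth i).trans_lt (max_clamp_sub_min_clamp_lt (hm i).1 (hmM i) (hM i).2 hcut)
  have := sum_lt_sum (fun j _ => hside j) ⟨i, mem_univ i, hlt⟩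
  rw [sum_add_distrib] at this
  omega

/-- for any ASHE with direction v ≠ 0, the envelope-transition width increases
by at most ‖v‖₁, and by at most ‖v‖₁ - 1 if some component is critical for some state of
[m,M] but not for another. -/
theorem stmt7 {d : ℕ} (C v : Fin d → ℤ) (R : Fin d → Fin d → Prop) (hv : v ≠ 0)
    (m M : Fin d → ℤ)
    (hm : ∀ i, 0 ≤ m i ∧ m i ≤ C i) (hM : ∀ i, 0 ≤ M i ∧ M i ≤ C i)
    (hmM : m ≤ M)
    (m' M' : Fin d → ℤ)
    (hm' : IsGLB {y | ∃ x : Fin d → ℤ, m ≤ x ∧ x ≤ M ∧ y = asheAct C v R x} m')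
    (hM' : IsLUB {y | ∃ x : Fin d → ℤ, m ≤ x ∧ x ≤ M ∧ y = asheAct C v R x} M') :
    (∑ i, |M' i - m' i| ≤ ∑ i, |M i - m i| + ∑ i, |v i|) ∧
    ((∃ i : Fin d, ∃ x y : Fin d → ℤ, m ≤ x ∧ x ≤ M ∧ m ≤ y ∧ y ≤ M ∧
        (0 ≤ x i + v i ∧ x i + v i ≤ C i) ∧ ¬(0 ≤ y i + v i ∧ y i + v i ≤ C i)) →
      ∑ i, |M' i - m' i| ≤ ∑ i, |M i - m i| + ∑ i, |v i| - 1) :=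
  stmt7_general C v R m M hm hM hmM m' M' hm' hM'
end

section
/- Let U be a nonempty subset of S and a an ASHE that is non-blocking on U, i.e., B(x) = ∅ for all x ∈ U. Then the envelope of the image {x·a : x ∈ U} equals the envelope transition applied to the envelope of U: ⟦U·a⟧ = ⟦U⟧ ⊡ a. -/
/-!
Blocking at `x` can only be caused by some `x j + v j` leaving `[0, C j]`, a condition on the
single coordinate `x j` whose complement is an interval. Over `ℤ` the bounds `m j` and `M j` are
attained by points of `U`, which are not blocked, so no point of the box `[m, M]` is blocked. On
the box the action is therefore the coordinatewise monotone clamp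
`t ↦ max 0 (min (t + v i) (C i))`, whose `i`-th extremes over the box are attained at the points
of `U` realising `m i` and `M i`.
-/

open Set

section AttainedBounds

variable {ι α : Type*} [LinearOrder α] {U : Set (ι → α)} {m M : ι → α}

theorem IsGLB.exists_apply_eq [PredOrder α] [IsPredArchimedean α] [NoMaxOrder α]
    (hm : IsGLB U m) (i : ι) : ∃ x ∈ U, x i = m i := by
  simpa using ((isGLB_pi.mp hm) i).mem_of_not_isPredPrelimit
    (by simp [Order.isPredPrelimit_iff_isMax])

theorem IsLUB.exists_apply_eq [SuccOrder α] [IsSuccArchimedean α] [NoMinOrder α]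
    (hM : IsLUB U M) (i : ι) : ∃ x ∈ U, x i = M i := by
  simpa using ((isLUB_pi.mp hM) i).mem_of_not_isSuccPrelimit
    (by simp [Order.isSuccPrelimit_iff_isMin])

end AttainedBounds

section MonotoneImage

variable {ι α β : Type*} [Preorder α] [Preorder β] {f : (ι → α) → ι → β} {g : ι → α → β}
  {U : Set (ι → α)} {m M : ι → α}

theorem isGLB_image_Icc_of_apply_eq (hg : ∀ i, Monotone (g i))
    (hf : ∀ x ∈ Icc m M, ∀ i, f x i = g i (x i)) (hUm : U ⊆ Icc m M)
    (hm : ∀ i, ∃ x ∈ U, x i = m i) {q : ι → β} (hq : IsGLB (f '' U) q) :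
    IsGLB (f '' Icc m M) q := by
  refine ⟨?_, fun b hb => hq.2 (lowerBounds_mono_set (image_mono hUm) hb)⟩
  rintro _ ⟨x, hx, rfl⟩ i
  obtain ⟨y, hyU, hyi⟩ := hm i
  calc q i ≤ f y i := hq.1 (mem_image_of_mem f hyU) i
    _ = g i (y i) := hf y (hUm hyU) i
    _ ≤ g i (x i) := hg i (hyi ▸ hx.1 i)
    _ = f x i := (hf x hx i).symm

theorem isLUB_image_Icc_of_apply_eq (hg : ∀ i, Monotone (g i))
    (hf : ∀ x ∈ Icc m M, ∀ i, f x i = g i (x i)) (hUm : U ⊆ Icc m M)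
    (hM : ∀ i, ∃ x ∈ U, x i = M i) {Q : ι → β} (hQ : IsLUB (f '' U) Q) :
    IsLUB (f '' Icc m M) Q := by
  refine ⟨?_, fun b hb => hQ.2 (upperBounds_mono_set (image_mono hUm) hb)⟩
  rintro _ ⟨x, hx, rfl⟩ i
  obtain ⟨y, hyU, hyi⟩ := hM i
  calc f x i = g i (x i) := hf x hx i
    _ ≤ g i (y i) := hg i (hyi ▸ hx.2 i)
    _ = f y i := (hf y (hUm hyU) i).symm
    _ ≤ Q i := hQ.1 (mem_image_of_mem f hyU) i

end MonotoneImage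

section Ashe

variable {d : ℕ} {C v : Fin d → ℤ} {R : Fin d → Fin d → Prop}

theorem asheAct_apply_of_not_blocked {x : Fin d → ℤ} {i : Fin d}
    (h : ¬ ∃ j, ¬(0 ≤ x j + v j ∧ x j + v j ≤ C j) ∧ R j i) :
    asheAct C v R x i = max 0 (min (x i + v i) (C i)) :=
  if_neg h

theorem not_blocked_of_mem_Icc {U : Set (Fin d → ℤ)} {m M x : Fin d → ℤ}
    (hm : ∀ j, ∃ y ∈ U, y j = m j) (hM : ∀ j, ∃ y ∈ U, y j = M j)
    (hnb : ∀ y ∈ U, ∀ i : Fin d, ¬ ∃ j, ¬(0 ≤ y j + v j ∧ y j + v j ≤ C j) ∧ R j i)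
    (hx : x ∈ Icc m M) (i : Fin d) :
    ¬ ∃ j, ¬(0 ≤ x j + v j ∧ x j + v j ≤ C j) ∧ R j i := by
  rintro ⟨j, hj, hR⟩
  obtain ⟨y, hyU, hyj⟩ := hm j
  obtain ⟨z, hzU, hzj⟩ := hM j
  have hy : 0 ≤ y j + v j := not_not.mp fun h => hnb y hyU i ⟨j, fun h' => h h'.1, hR⟩
  have hz : z j + v j ≤ C j := not_not.mp fun h => hnb z hzU i ⟨j, fun h' => h h'.2, hR⟩
  exact hj ⟨by linarith [hx.1 j], by linarith [hx.2 j]⟩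

end Ashe

theorem stmt10_general {d : ℕ} (C v : Fin d → ℤ) (R : Fin d → Fin d → Prop)
    (U : Set (Fin d → ℤ))
    (hnb : ∀ x ∈ U, ∀ i : Fin d, ¬ ∃ j, ¬(0 ≤ x j + v j ∧ x j + v j ≤ C j) ∧ R j i)
    (m M : Fin d → ℤ) (hm : IsGLB U m) (hM : IsLUB U M)
    (q Q : Fin d → ℤ)
    (hq : IsGLB (asheAct C v R '' U) q) (hQ : IsLUB (asheAct C v R '' U) Q) :
    IsGLB {y | ∃ x : Fin d → ℤ, m ≤ x ∧ x ≤ M ∧ y = asheAct C v R x} q ∧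
    IsLUB {y | ∃ x : Fin d → ℤ, m ≤ x ∧ x ≤ M ∧ y = asheAct C v R x} Q := by
  have hbox : {y | ∃ x : Fin d → ℤ, m ≤ x ∧ x ≤ M ∧ y = asheAct C v R x} =
      asheAct C v R '' Icc m M := by
    ext y
    simp [eq_comm, and_assoc]
  have hUm : U ⊆ Icc m M := fun x hx => ⟨hm.1 hx, hM.1 hx⟩
  have hclamp : ∀ x ∈ Icc m M, ∀ i, asheAct C v R x i = max 0 (min (x i + v i) (C i)) :=
    fun x hx i => asheAct_apply_of_not_blocked
      (not_blocked_of_mem_Icc hm.exists_apply_eq hM.exists_apply_eq hnb hx i)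
  have hmono : ∀ i, Monotone fun t : ℤ => max 0 (min (t + v i) (C i)) :=
    fun i _ _ hab => max_le_max le_rfl (min_le_min (add_le_add_left hab _) le_rfl)
  rw [hbox]
  exact ⟨isGLB_image_Icc_of_apply_eq hmono hclamp hUm hm.exists_apply_eq hq,
    isLUB_image_Icc_of_apply_eq hmono hclamp hUm hM.exists_apply_eq hQ⟩

/-- if an ASHE is non-blocking on a nonempty set U ⊆ S, then the envelope of
the image of U equals the envelope transition applied to the envelope of U. -/
theorem stmt10 {d : ℕ} (C v : Fin d → ℤ) (R : Fin d → Fin d → Prop)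
    (U : Set (Fin d → ℤ)) (hU : U.Nonempty)
    (hUS : ∀ x ∈ U, ∀ i, 0 ≤ x i ∧ x i ≤ C i)
    (hnb : ∀ x ∈ U, ∀ i : Fin d, ¬ ∃ j, ¬(0 ≤ x j + v j ∧ x j + v j ≤ C j) ∧ R j i)
    (m M : Fin d → ℤ) (hm : IsGLB U m) (hM : IsLUB U M)
    (q Q : Fin d → ℤ)
    (hq : IsGLB (asheAct C v R '' U) q) (hQ : IsLUB (asheAct C v R '' U) Q) :
    IsGLB {y | ∃ x : Fin d → ℤ, m ≤ x ∧ x ≤ M ∧ y = asheAct C v R x} q ∧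
    IsLUB {y | ∃ x : Fin d → ℤ, m ≤ x ∧ x ≤ M ∧ y = asheAct C v R x} Q :=
  stmt10_general C v R U hnb m M hm hM q Q hq hQ
end

section
/- Let a be a unidimensional ASHE (its direction vector v has exactly one nonzero component) and U ⊆ S a nonempty subset such that for each component i the projection {x_i : x ∈ U} is an integer interval. Then ⟦U·a⟧ = ⟦U⟧ ⊡ a. -/
lemma Int.mem_of_isGLB {s : Set ℤ} {a : ℤ} (hs : s.Nonempty) (ha : IsGLB s a) : a ∈ s :=
  ha.csInf_eq hs ▸ Int.csInf_mem hs ha.bddBelow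

lemma Int.mem_of_isLUB {s : Set ℤ} {a : ℤ} (hs : s.Nonempty) (ha : IsLUB s a) : a ∈ s :=
  ha.csSup_eq hs ▸ Int.csSup_mem hs ha.bddAbove

section PiEnvelope

variable {ι α : Type*} [Preorder α] {A B : Set (ι → α)}

lemma IsGLB.of_subset_of_forall_exists_apply_eq (hAB : A ⊆ B)
    (hBA : ∀ b ∈ B, ∀ i, ∃ a ∈ A, a i = b i) {q : ι → α} (hq : IsGLB A q) : IsGLB B q := by
  refine ⟨fun b hb i => ?_, fun l hl => hq.2 fun a ha => hl (hAB ha)⟩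
  obtain ⟨a, ha, hai⟩ := hBA b hb i
  exact hai ▸ hq.1 ha i

lemma IsLUB.of_subset_of_forall_exists_apply_eq (hAB : A ⊆ B)
    (hBA : ∀ b ∈ B, ∀ i, ∃ a ∈ A, a i = b i) {Q : ι → α} (hQ : IsLUB A Q) : IsLUB B Q := by
  refine ⟨fun b hb i => ?_, fun l hl => hQ.2 fun a ha => hl (hAB ha)⟩
  obtain ⟨a, ha, hai⟩ := hBA b hb i
  exact hai ▸ hQ.1 ha i

end PiEnvelope

lemma exists_mem_apply_eq_of_isGLB_of_isLUB {ι : Type*} {U : Set (ι → ℤ)} (hU : U.Nonempty)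
    (hproj : ∀ i, ∀ x ∈ U, ∀ y ∈ U, ∀ c : ℤ, x i ≤ c → c ≤ y i → ∃ z ∈ U, z i = c)
    {m M : ι → ℤ} (hm : IsGLB U m) (hM : IsLUB U M) {i : ι} {c : ℤ}
    (hmc : m i ≤ c) (hcM : c ≤ M i) : ∃ z ∈ U, z i = c := by
  obtain ⟨x, hx, hxi⟩ := Int.mem_of_isGLB (hU.image _) (isGLB_pi.1 hm i)
  obtain ⟨y, hy, hyi⟩ := Int.mem_of_isLUB (hU.image _) (isLUB_pi.1 hM i)
  exact hproj i x hx y hy c (hxi.trans_le hmc) (hcM.trans_eq hyi.symm)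

section AsheAct

variable {d : ℕ} {C v : Fin d → ℤ} {R : Fin d → Fin d → Prop}

lemma asheAct_apply_of_v_eq_zero {x : Fin d → ℤ} {i : Fin d} (hv : v i = 0)
    (hx : 0 ≤ x i ∧ x i ≤ C i) : asheAct C v R x i = x i := by
  unfold asheAct
  split_ifs
  · rfl
  · rw [hv, add_zero]
    omega

lemma asheAct_apply_congr {x x' : Fin d → ℤ} (hx : ∀ j, 0 ≤ x j ∧ x j ≤ C j)
    (hx' : ∀ j, 0 ≤ x' j ∧ x' j ≤ C j) (hmoved : ∀ j, v j ≠ 0 → x j = x' j) {i : Fin d}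
    (hi : x i = x' i) : asheAct C v R x i = asheAct C v R x' i := by
  have hblocked : ∀ z : Fin d → ℤ, (∀ j, 0 ≤ z j ∧ z j ≤ C j) →
      ((∃ j, ¬(0 ≤ z j + v j ∧ z j + v j ≤ C j) ∧ R j i) ↔
        ∃ j, v j ≠ 0 ∧ ¬(0 ≤ z j + v j ∧ z j + v j ≤ C j) ∧ R j i) := by
    intro z hz
    -- a coordinate with `v j = 0` never leaves `[0, C j]`
    refine ⟨fun ⟨j, hj, hR⟩ => ⟨j, fun hv => hj ?_, hj, hR⟩, fun ⟨j, _, hj, hR⟩ => ⟨j, hj, hR⟩⟩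
    rw [hv, add_zero]
    exact hz j
  have hiff : (∃ j, ¬(0 ≤ x j + v j ∧ x j + v j ≤ C j) ∧ R j i) ↔
      ∃ j, ¬(0 ≤ x' j + v j ∧ x' j + v j ≤ C j) ∧ R j i := by
    rw [hblocked x hx, hblocked x' hx']
    exact exists_congr fun j => and_congr_right fun hv => by rw [hmoved j hv]
  classical
  simp only [asheAct, hi]
  exact if_congr hiff rfl rfl

lemma asheAct_apply_eq_of_unidimensional {i₀ : Fin d} (hv : ∀ j, j ≠ i₀ → v j = 0)
    {x x' : Fin d → ℤ} (hx : ∀ j, 0 ≤ x j ∧ x j ≤ C j) (hx' : ∀ j, 0 ≤ x' j ∧ x' j ≤ C j)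
    {i : Fin d} (hi : x i = x' i) : asheAct C v R x i = asheAct C v R x' i := by
  rcases eq_or_ne i i₀ with rfl | hne
  · refine asheAct_apply_congr hx hx' (fun j hvj => ?_) hi
    rwa [not_imp_comm.1 (hv j) hvj]
  · rw [asheAct_apply_of_v_eq_zero (hv i hne) (hx i),
      asheAct_apply_of_v_eq_zero (hv i hne) (hx' i), hi]

end AsheAct

/-- for a unidimensional ASHE and a nonempty set U ⊆ S whose projections are
integer intervals, the envelope of the image of U equals the envelope transition applied to
the envelope of U. -/
theorem stmt11 {d : ℕ} (C v : Fin d → ℤ) (R : Fin d → Fin d → Prop)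
    (huni : ∃ i₀ : Fin d, v i₀ ≠ 0 ∧ ∀ j : Fin d, j ≠ i₀ → v j = 0)
    (U : Set (Fin d → ℤ)) (hU : U.Nonempty)
    (hUS : ∀ x ∈ U, ∀ i, 0 ≤ x i ∧ x i ≤ C i)
    (hproj : ∀ i : Fin d, ∀ x ∈ U, ∀ y ∈ U, ∀ c : ℤ,
      x i ≤ c → c ≤ y i → ∃ z ∈ U, z i = c)
    (m M : Fin d → ℤ) (hm : IsGLB U m) (hM : IsLUB U M)
    (q Q : Fin d → ℤ)
    (hq : IsGLB (asheAct C v R '' U) q) (hQ : IsLUB (asheAct C v R '' U) Q) :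
    IsGLB {y | ∃ x : Fin d → ℤ, m ≤ x ∧ x ≤ M ∧ y = asheAct C v R x} q ∧
    IsLUB {y | ∃ x : Fin d → ℤ, m ≤ x ∧ x ≤ M ∧ y = asheAct C v R x} Q := by
  obtain ⟨i₀, -, hv⟩ := huni
  have hbox : ∀ x, m ≤ x → x ≤ M → ∀ j, 0 ≤ x j ∧ x j ≤ C j := fun x hmx hxM j =>
    ⟨(hm.2 (fun u hu j => (hUS u hu j).1) j).trans (hmx j),
      (hxM j).trans (hM.2 (fun u hu j => (hUS u hu j).2) j)⟩
  have hsub : asheAct C v R '' U ⊆ {y | ∃ x, m ≤ x ∧ x ≤ M ∧ y = asheAct C v R x} := by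
    rintro _ ⟨u, hu, rfl⟩
    exact ⟨u, hm.1 hu, hM.1 hu, rfl⟩
  have hmatch : ∀ b ∈ {y | ∃ x, m ≤ x ∧ x ≤ M ∧ y = asheAct C v R x}, ∀ i,
      ∃ a ∈ asheAct C v R '' U, a i = b i := by
    rintro _ ⟨x, hmx, hxM, rfl⟩ i
    obtain ⟨u, hu, hui⟩ := exists_mem_apply_eq_of_isGLB_of_isLUB hU hproj hm hM (hmx i) (hxM i)
    exact ⟨_, ⟨u, hu, rfl⟩,
      asheAct_apply_eq_of_unidimensional hv (hUS u hu) (hbox x hmx hxM) hui⟩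
  exact ⟨hq.of_subset_of_forall_exists_apply_eq hsub hmatch,
    hQ.of_subset_of_forall_exists_apply_eq hsub hmatch⟩
end

section
/- Let P = {x ∈ ℝ^d : xA ≤ b} be a polytope defined by a d×h matrix A and b ∈ ℝ^h, and let s ∈ ℝ^d with s ≥ 0. Then the Minkowski sum P ⊕ [−s/2, s/2] satisfies P ⊕ [−s/2, s/2] ⊆ {x ∈ ℝ^d : xA ≤ b + (s/2)|A|}, where |A| denotes the componentwise absolute value of A. Moreover, for a box [m,M] ⊆ ℝ^d with s = M − m, we have [m,M] ∩ P ≠ ∅ if and only if m + s/2 ∈ P ⊕ [−s/2, s/2]. -/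
/-- The polytope `{x : xA ≤ b}`. -/
def poly {d h : ℕ} (A : Matrix (Fin d) (Fin h) ℝ) (b : Fin h → ℝ) : Set (Fin d → ℝ) :=
  {x | ∀ j : Fin h, ∑ i, x i * A i j ≤ b j}

/-- The Minkowski sum of `P` with the box `[-s/2, s/2]`. -/
def minkBox {d : ℕ} (P : Set (Fin d → ℝ)) (s : Fin d → ℝ) : Set (Fin d → ℝ) :=
  {z | ∃ p ∈ P, ∃ y : Fin d → ℝ, (∀ i, -(s i / 2) ≤ y i ∧ y i ≤ s i / 2) ∧ z = p + y}

/-!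
A point `z` lies in `P ⊕ [-s/2, s/2]` iff some `p ∈ P` satisfies `|z i - p i| ≤ s i / 2` for
all `i`. The first claim then follows by splitting `zA = pA + (z - p)A` and bounding each term
of `(z - p)A` by `(s i / 2) |A i j|`. For the second, `|m + (M - m)/2 - p| ≤ (M - m)/2` says
exactly that `p ∈ [m, M]`, coordinatewise.
-/

theorem mem_minkBox_iff {d : ℕ} {P : Set (Fin d → ℝ)} {s z : Fin d → ℝ} :
    z ∈ minkBox P s ↔ ∃ p ∈ P, ∀ i, |z i - p i| ≤ s i / 2 := by
  constructor
  · rintro ⟨p, hp, y, hy, rfl⟩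
    exact ⟨p, hp, fun i => by simpa [abs_le] using hy i⟩
  · rintro ⟨p, hp, hz⟩
    exact ⟨p, hp, z - p, fun i => abs_le.1 (hz i), by simp⟩

theorem sum_mul_le_add_sum_abs_of_abs_sub_le {ι : Type*} [Fintype ι] {x p r a : ι → ℝ}
    (h : ∀ i, |x i - p i| ≤ r i) :
    ∑ i, x i * a i ≤ ∑ i, p i * a i + ∑ i, r i * |a i| := by
  rw [← Finset.sum_add_distrib]
  refine Finset.sum_le_sum fun i _ => ?_
  calc x i * a i = p i * a i + (x i - p i) * a i := by ring
    _ ≤ p i * a i + |x i - p i| * |a i| := by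
        rw [← abs_mul]; gcongr; exact le_abs_self _
    _ ≤ p i * a i + r i * |a i| := by gcongr; exact h i

theorem minkBox_poly_subset {d h : ℕ} (A : Matrix (Fin d) (Fin h) ℝ) (b : Fin h → ℝ)
    (s : Fin d → ℝ) :
    minkBox (poly A b) s ⊆
      {x | ∀ j, ∑ i, x i * A i j ≤ b j + ∑ i, (s i / 2) * |A i j|} := by
  intro z hz j
  obtain ⟨p, hp, hzp⟩ := mem_minkBox_iff.1 hz
  calc ∑ i, z i * A i j ≤ ∑ i, p i * A i j + ∑ i, (s i / 2) * |A i j| :=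
        sum_mul_le_add_sum_abs_of_abs_sub_le hzp
    _ ≤ b j + ∑ i, (s i / 2) * |A i j| := by gcongr; exact hp j

theorem abs_midpoint_sub_le_half_iff {m M x : ℝ} :
    |m + (M - m) / 2 - x| ≤ (M - m) / 2 ↔ x ∈ Set.Icc m M := by
  rw [abs_le, Set.mem_Icc]
  constructor <;> rintro ⟨h₁, h₂⟩ <;> constructor <;> linarith

theorem Icc_inter_nonempty_iff_midpoint_mem_minkBox {d : ℕ} (P : Set (Fin d → ℝ))
    (m M : Fin d → ℝ) :
    (Set.Icc m M ∩ P).Nonempty ↔ (m + fun i => (M - m) i / 2) ∈ minkBox P (M - m) := by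
  simp only [mem_minkBox_iff, Pi.add_apply, Pi.sub_apply, abs_midpoint_sub_le_half_iff]
  constructor
  · rintro ⟨p, ⟨hmp, hpM⟩, hp⟩
    exact ⟨p, hp, fun i => ⟨hmp i, hpM i⟩⟩
  · rintro ⟨p, hp, hpI⟩
    exact ⟨p, ⟨fun i => (hpI i).1, fun i => (hpI i).2⟩, hp⟩

theorem stmt15_general {d h : ℕ} (A : Matrix (Fin d) (Fin h) ℝ) (b : Fin h → ℝ)
    (s : Fin d → ℝ)
    (m M : Fin d → ℝ) (hsMm : s = M - m) :
    (minkBox (poly A b) s ⊆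
      {x : Fin d → ℝ | ∀ j : Fin h, ∑ i, x i * A i j ≤ b j + ∑ i, (s i / 2) * |A i j|}) ∧
    ((Set.Icc m M ∩ poly A b).Nonempty ↔
      (m + fun i => s i / 2) ∈ minkBox (poly A b) s) := by
  subst hsMm
  exact ⟨minkBox_poly_subset A b _, Icc_inter_nonempty_iff_midpoint_mem_minkBox _ m M⟩

/-- the Minkowski sum `P ⊕ [-s/2,s/2]` is contained in
`{x : xA ≤ b + (s/2)|A|}`, and a box `[m,M]` (with `s = M - m`) meets `P` iff its center
`m + s/2` lies in `P ⊕ [-s/2,s/2]`. -/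
theorem stmt15 {d h : ℕ} (A : Matrix (Fin d) (Fin h) ℝ) (b : Fin h → ℝ)
    (s : Fin d → ℝ) (hs : ∀ i, 0 ≤ s i)
    (m M : Fin d → ℝ) (hsMm : s = M - m) :
    (minkBox (poly A b) s ⊆
      {x : Fin d → ℝ | ∀ j : Fin h, ∑ i, x i * A i j ≤ b j + ∑ i, (s i / 2) * |A i j|}) ∧
    ((Set.Icc m M ∩ poly A b).Nonempty ↔
      (m + fun i => s i / 2) ∈ minkBox (poly A b) s) :=
  stmt15_general A b s m M hsMm
end

section
/- Let S be a finite lattice with bottom ⊥ and top ⊤, and for each letter a define the envelope transition [m,M] ⊡ a = ⟦{x·a : m ≤ x ≤ M}⟧. For any word w = u_1…u_n of letters, the set S·w = {x·u_1·…·u_n : x ∈ S} is contained in the interval [⊥,⊤] ⊡ u_1 ⊡ … ⊡ u_n. Consequently, if [⊥,⊤] ⊡ u_1 ⊡ … ⊡ u_n is a singleton interval [z,z], then all trajectories have coalesced: x·w = z for every x ∈ S. -/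
/-- The envelope chain: iterate the envelope transition along a word, starting from [⊥,⊤]. -/
def envFold {S : Type*} [CompleteLattice S] {A : Type*} (act : A → S → S)
    (w : List A) : S × S :=
  w.foldl (fun p a => (sInf (act a '' Set.Icc p.1 p.2), sSup (act a '' Set.Icc p.1 p.2)))
    ((⊥ : S), (⊤ : S))

open Set

section EnvelopeTransition

variable {S : Type*} [CompleteLattice S] {A : Type*} (act : A → S → S)

def envStep (p : S × S) (a : A) : S × S :=
  (sInf (act a '' Icc p.1 p.2), sSup (act a '' Icc p.1 p.2))

theorem act_mem_envStep {p : S × S} {x : S} (a : A) (hx : x ∈ Icc p.1 p.2) :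
    act a x ∈ Icc (envStep act p a).1 (envStep act p a).2 :=
  have hmem : act a x ∈ act a '' Icc p.1 p.2 := mem_image_of_mem _ hx
  ⟨sInf_le hmem, le_sSup hmem⟩

theorem foldl_act_mem_foldl_envStep (w : List A) {p : S × S} {x : S} (hx : x ∈ Icc p.1 p.2) :
    w.foldl (fun s a => act a s) x ∈
      Icc (w.foldl (envStep act) p).1 (w.foldl (envStep act) p).2 := by
  induction w generalizing p x with
  | nil => exact hx
  | cons a w ih => exact ih (act_mem_envStep act a hx)

theorem foldl_act_mem_envFold (w : List A) (x : S) :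
    w.foldl (fun s a => act a s) x ∈ Icc (envFold act w).1 (envFold act w).2 :=
  foldl_act_mem_foldl_envStep act w ⟨bot_le, le_top⟩

end EnvelopeTransition

/-- every trajectory x·u₁·…·uₙ lies in the interval obtained by iterating the
envelope transition from [⊥,⊤]; hence if that interval is a singleton [z,z], all trajectories
have coalesced at z. -/
theorem stmt19 {S : Type*} [CompleteLattice S] {A : Type*}
    (act : A → S → S) (w : List A) :
    (∀ x : S, w.foldl (fun s a => act a s) x ∈
      Set.Icc (envFold act w).1 (envFold act w).2) ∧
    ((envFold act w).1 = (envFold act w).2 →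
      ∀ x : S, w.foldl (fun s a => act a s) x = (envFold act w).1) := by
  refine ⟨foldl_act_mem_envFold act w, fun hsingleton x => ?_⟩
  obtain ⟨hlower, hupper⟩ := foldl_act_mem_envFold act w x
  exact le_antisymm (hsingleton ▸ hupper) hlower
end
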